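/- There exists a unique α ∈ (0,1) satisfying √(2π)(1-α²)exp(α²/2)(erf(α/√2)+1) = 2α; numerically α ≈ 0.8399. -/

import Mathlib

open Real

/-!
Since `√(2π) · erf (a/√2) = 2 ∫₀^a exp(-u²/2) du`, the equation reads `alphaDefect a = 0`. The
factor `exp(a²/2)` cancels the derivative of the integral, so
`alphaDefect' a = -a(1+a²) exp(a²/2) (2∫₀^a exp(-u²/2) du + √(2π)) - 2a² < 0` for `a > 0`, and
`alphaDefect` has at most one zero on `[0, ∞)`. Integrating the cubic Taylor bound for `exp`
termwise gives `alphaDefect 0.8389 > 0 > alphaDefect 0.8409`, and the intermediate value theorem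
puts the zero in between.
-/

/-- The error function `erf z = (2/√π) ∫₀^z exp (-s²) ds`. -/
noncomputable def erf (z : ℝ) : ℝ :=
  (2 / Real.sqrt π) * ∫ s in (0 : ℝ)..z, Real.exp (-s ^ 2)

theorem abs_exp_sub_taylor_three_le {t : ℝ} (ht : |t| ≤ 1) :
    |exp t - (1 + t + t ^ 2 / 2 + t ^ 3 / 6)| ≤ 5 * t ^ 4 / 96 := by
  have h := exp_bound ht (n := 4) (by norm_num)
  simp only [Finset.sum_range_succ, Finset.sum_range_zero, Nat.factorial] at h
  norm_num at h
  rw [pow_abs, abs_of_nonneg (by positivity : (0 : ℝ) ≤ t ^ 4)] at h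
  convert h using 2; ring

theorem abs_integral_exp_neg_sq_div_two_sub_le {a : ℝ} (ha : 0 ≤ a) (ha2 : a ^ 2 ≤ 2) :
    |(∫ u in (0 : ℝ)..a, exp (-u ^ 2 / 2)) - (a - a ^ 3 / 6 + a ^ 5 / 40 - a ^ 7 / 336)|
      ≤ 5 * a ^ 9 / 13824 := by
  have hp : ∫ u in (0 : ℝ)..a, (1 - u ^ 2 / 2 + u ^ 4 / 8 - u ^ 6 / 48)
      = a - a ^ 3 / 6 + a ^ 5 / 40 - a ^ 7 / 336 := by
    rw [intervalIntegral.integral_sub, intervalIntegral.integral_add, intervalIntegral.integral_sub]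
    all_goals first | (simp [integral_pow]; ring) | (apply Continuous.intervalIntegrable; fun_prop)
  have hq : ∫ u in (0 : ℝ)..a, 5 * u ^ 8 / 1536 = 5 * a ^ 9 / 13824 := by
    simp [integral_pow]; ring
  rw [← hp, ← hq, ← intervalIntegral.integral_sub (by apply Continuous.intervalIntegrable; fun_prop)
    (by apply Continuous.intervalIntegrable; fun_prop), ← Real.norm_eq_abs]
  refine intervalIntegral.norm_integral_le_of_norm_le ha (MeasureTheory.ae_of_all _ fun u hu => ?_) ?_
  · have hu2 : |-u ^ 2 / 2| ≤ 1 := by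
      rw [abs_le]; constructor <;> nlinarith [hu.1, hu.2]
    rw [Real.norm_eq_abs]
    convert abs_exp_sub_taylor_three_le hu2 using 1 <;> ring_nf
  · apply Continuous.intervalIntegrable; fun_prop

theorem integral_exp_neg_sq_div_two_nonneg {a : ℝ} (ha : 0 ≤ a) :
    0 ≤ ∫ u in (0 : ℝ)..a, exp (-u ^ 2 / 2) :=
  intervalIntegral.integral_nonneg ha fun _ _ => (exp_pos _).le

theorem sqrt_two_pi_mul_erf_div_sqrt_two (x : ℝ) :
    √(2 * π) * erf (x / √2) = 2 * ∫ u in (0 : ℝ)..x, exp (-u ^ 2 / 2) := by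
  have hsub : ∫ u in (0 : ℝ)..x, exp (-u ^ 2 / 2) = √2 * ∫ s in (0 : ℝ)..x / √2, exp (-s ^ 2) := by
    have h := intervalIntegral.integral_comp_div (fun s => exp (-s ^ 2)) (a := 0) (b := x)
      (Real.sqrt_ne_zero'.mpr two_pos)
    simpa only [div_pow, Real.sq_sqrt zero_le_two, zero_div, smul_eq_mul, neg_div] using h
  have hπ : 0 < √π := Real.sqrt_pos.mpr pi_pos
  rw [hsub, erf, Real.sqrt_mul zero_le_two]
  field_simp

noncomputable def alphaDefect (a : ℝ) : ℝ :=
  (1 - a ^ 2) * exp (a ^ 2 / 2) * (2 * (∫ u in (0 : ℝ)..a, exp (-u ^ 2 / 2)) + √(2 * π)) - 2 * a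

theorem eq_iff_alphaDefect_eq_zero (a : ℝ) :
    √(2 * π) * (1 - a ^ 2) * exp (a ^ 2 / 2) * (erf (a / √2) + 1) = 2 * a ↔ alphaDefect a = 0 := by
  rw [alphaDefect, ← sqrt_two_pi_mul_erf_div_sqrt_two, sub_eq_zero]
  constructor <;> intro h <;> linear_combination h

theorem hasDerivAt_alphaDefect (a : ℝ) :
    HasDerivAt alphaDefect
      (-(a * (1 + a ^ 2) * exp (a ^ 2 / 2) * (2 * (∫ u in (0 : ℝ)..a, exp (-u ^ 2 / 2)) + √(2 * π)))
        - 2 * a ^ 2) a := by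
  have hI := ((by fun_prop : Continuous fun u : ℝ => exp (-u ^ 2 / 2)).integral_hasStrictDerivAt
    0 a).hasDerivAt
  have hE : HasDerivAt (fun x => exp (x ^ 2 / 2)) (exp (a ^ 2 / 2) * a) a := by
    convert ((hasDerivAt_pow 2 a).div_const 2).exp using 1; ring
  have h : HasDerivAt alphaDefect _ a :=
    ((((hasDerivAt_pow 2 a).const_sub 1).mul hE).mul ((hI.const_mul 2).add_const (√(2 * π)))).sub
      ((hasDerivAt_id' a).const_mul 2)
  have hexp : exp (a ^ 2 / 2) * exp (-a ^ 2 / 2) = 1 := by rw [← exp_add]; ring_nf; exact exp_zero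
  convert h using 1
  simp only [Pi.mul_apply]
  linear_combination (-2 * (1 - a ^ 2)) * hexp

theorem continuous_alphaDefect : Continuous alphaDefect :=
  continuous_iff_continuousAt.2 fun a => (hasDerivAt_alphaDefect a).continuousAt

theorem alphaDefect_strictAntiOn : StrictAntiOn alphaDefect (Set.Ici 0) := by
  refine strictAntiOn_of_deriv_neg (convex_Ici 0) continuous_alphaDefect.continuousOn fun x hx => ?_
  rw [interior_Ici, Set.mem_Ioi] at hx
  have hI := integral_exp_neg_sq_div_two_nonneg hx.le
  have hpos : 0 < x * (1 + x ^ 2) * exp (x ^ 2 / 2) *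
      (2 * (∫ u in (0 : ℝ)..x, exp (-u ^ 2 / 2)) + √(2 * π)) := by positivity
  rw [(hasDerivAt_alphaDefect x).deriv]
  linarith [sq_nonneg x]

theorem sqrt_two_pi_mem : √(2 * π) ∈ Set.Ioo 2.50662 2.50664 := by
  constructor
  · rw [Real.lt_sqrt (by norm_num)]; nlinarith [pi_gt_d6]
  · rw [Real.sqrt_lt' (by norm_num)]; nlinarith [pi_lt_d6]

theorem alphaDefect_pos : 0 < alphaDefect 0.8389 := by
  obtain ⟨hI, -⟩ := abs_le.mp
    (abs_integral_exp_neg_sq_div_two_sub_le (a := 0.8389) (by norm_num) (by norm_num))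
  obtain ⟨hE, -⟩ := abs_le.mp
    (abs_exp_sub_taylor_three_le (t := 0.8389 ^ 2 / 2) (by norm_num [abs_le]))
  have hB : 1.4998 + 2.50662 ≤ 2 * (∫ u in (0 : ℝ)..0.8389, exp (-u ^ 2 / 2)) + √(2 * π) := by
    linarith [sqrt_two_pi_mem.1]
  have hE' : 1.4202 ≤ exp (0.8389 ^ 2 / 2) := by linarith
  have hprod := mul_le_mul hE' hB (by norm_num) (exp_pos _).le
  unfold alphaDefect
  linarith

theorem alphaDefect_neg : alphaDefect 0.8409 < 0 := by
  obtain ⟨-, hI⟩ := abs_le.mp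
    (abs_integral_exp_neg_sq_div_two_sub_le (a := 0.8409) (by norm_num) (by norm_num))
  obtain ⟨-, hE⟩ := abs_le.mp
    (abs_exp_sub_taylor_three_le (t := 0.8409 ^ 2 / 2) (by norm_num [abs_le]))
  have hB : 2 * (∫ u in (0 : ℝ)..0.8409, exp (-u ^ 2 / 2)) + √(2 * π) ≤ 1.5032 + 2.50664 := by
    linarith [sqrt_two_pi_mem.2]
  have hE' : exp (0.8409 ^ 2 / 2) ≤ 1.4243 := by linarith
  have hB0 : 0 ≤ 2 * (∫ u in (0 : ℝ)..0.8409, exp (-u ^ 2 / 2)) + √(2 * π) := by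
    have hI0 := integral_exp_neg_sq_div_two_nonneg (a := 0.8409) (by norm_num)
    positivity
  have hprod := mul_le_mul hE' hB hB0 (by norm_num)
  unfold alphaDefect
  linarith

theorem alpha_exists_unique :
    (∃! α : ℝ, α ∈ Set.Ioo (0 : ℝ) 1 ∧
      Real.sqrt (2 * π) * (1 - α ^ 2) * Real.exp (α ^ 2 / 2)
        * (erf (α / Real.sqrt 2) + 1) = 2 * α) ∧
    ∀ α ∈ Set.Ioo (0 : ℝ) 1,
      Real.sqrt (2 * π) * (1 - α ^ 2) * Real.exp (α ^ 2 / 2)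
          * (erf (α / Real.sqrt 2) + 1) = 2 * α →
        |α - 0.8399| < 0.001 := by
  obtain ⟨α, ⟨hα_lo, hα_hi⟩, hα⟩ := intermediate_value_Ioo' (by norm_num : (0.8389 : ℝ) ≤ 0.8409)
    continuous_alphaDefect.continuousOn ⟨alphaDefect_neg, alphaDefect_pos⟩
  have hα01 : α ∈ Set.Ioo (0 : ℝ) 1 := ⟨by linarith, by linarith⟩
  have huniq : ∀ x ∈ Set.Ioo (0 : ℝ) 1,
      √(2 * π) * (1 - x ^ 2) * exp (x ^ 2 / 2) * (erf (x / √2) + 1) = 2 * x → x = α :=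
    fun x hx hx_eq => alphaDefect_strictAntiOn.injOn hx.1.le hα01.1.le
      (((eq_iff_alphaDefect_eq_zero x).1 hx_eq).trans hα.symm)
  refine ⟨⟨α, ⟨hα01, (eq_iff_alphaDefect_eq_zero α).2 hα⟩, fun x hx => huniq x hx.1 hx.2⟩,
    fun x hx hx_eq => ?_⟩
  rw [huniq x hx hx_eq, abs_lt]
  constructor <;> linarith
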